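/- Let p be an odd prime and suppose E, A ⊆ 𝔽_p^3 form a spectral pair with |E| = |A| = mp, where 2 ≤ m ≤ p − 1. Then for every two-dimensional subspace P of 𝔽_p^3, the number of one-dimensional subspaces contained in P that are determined by E is at most p, and likewise for A (a plane contains p + 1 one-dimensional subspaces, so at least one direction of each plane is not determined). -/

import Mathlib

open Finset

/-- The character `x ↦ e^{2πi (x·a)/p}` on `𝔽_p^d`. -/
noncomputable def chr (p : ℕ) {d : ℕ} (a x : Fin d → ZMod p) : ℂ :=
  Complex.exp (2 * (Real.pi : ℂ) * Complex.I *
    ((ZMod.val (∑ i, x i * a i) : ℕ) : ℂ) / (p : ℂ))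

/-- `(E, A)` is a spectral pair: the characters `χ_a`, `a ∈ A`, restricted to `E`,
are pairwise orthogonal, span `L²(E)`, and are linearly independent, i.e. they
form an orthogonal basis of `L²(E)`. -/
def IsSpectralPair (p : ℕ) {d : ℕ} (E A : Finset (Fin d → ZMod p)) : Prop :=
  (∀ a ∈ A, ∀ b ∈ A, a ≠ b →
    ∑ x ∈ E, chr p a x * (starRingEnd ℂ) (chr p b x) = 0) ∧
  (∀ f : E → ℂ, ∃ c : A → ℂ, ∀ x : E, f x = ∑ a : A, c a * chr p a.1 x.1) ∧
  (∀ c : A → ℂ, (∀ x : E, ∑ a : A, c a * chr p a.1 x.1 = 0) → ∀ a, c a = 0)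

/-- `E` is a spectral set. -/
def IsSpectral (p : ℕ) {d : ℕ} (E : Finset (Fin d → ZMod p)) : Prop :=
  ∃ A, IsSpectralPair p E A

/-- `E` tiles `𝔽_p^d` by translation. -/
def Tiles (p : ℕ) {d : ℕ} (E : Finset (Fin d → ZMod p)) : Prop :=
  ∃ A : Finset (Fin d → ZMod p),
    ∀ x, (∑ a ∈ A, if x - a ∈ E then (1 : ℕ) else 0) = 1

/-- `E` determines the direction (one-dimensional subspace) `D`. -/
def Determines (p : ℕ) {d : ℕ} (E : Finset (Fin d → ZMod p))
    (D : Submodule (ZMod p) (Fin d → ZMod p)) : Prop :=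
  ∃ e₁ ∈ E, ∃ e₂ ∈ E, e₁ ≠ e₂ ∧ e₁ - e₂ ∈ D

/-- The Fourier transform of the indicator function of `E`. -/
noncomputable def ftE (p : ℕ) {d : ℕ} (E : Finset (Fin d → ZMod p))
    (ξ : Fin d → ZMod p) : ℂ :=
  ((p : ℂ) ^ d)⁻¹ * ∑ x ∈ E, Complex.exp (-(2 * (Real.pi : ℂ) * Complex.I *
    ((ZMod.val (∑ i, x i * ξ i) : ℕ) : ℂ) / (p : ℂ)))

/-- The orthogonal set `S^⊥ = {x : x · y = 0 for all y ∈ S}`. -/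
def perpSet (p : ℕ) {d : ℕ} (S : Submodule (ZMod p) (Fin d → ZMod p)) :
    Set (Fin d → ZMod p) :=
  {x | ∀ y ∈ S, ∑ i, x i * y i = 0}

/-!
Write `Ê(ξ) = ∑_{x ∈ E} e(x·ξ/p)`. Orthogonality of the spectrum says `Ê` vanishes on
`(A - A) \ {0}`, and since the character table of a spectral pair is square, also `Â` vanishes
on `(E - E) \ {0}`. The vanishing of `Ê(ξ)` only depends on the line through `ξ`: as the
`p`-th roots of unity satisfy no rational relation other than multiples of `∑ ζ ^ j = 0`, it
means that `E` meets the `p` hyperplanes `x·ξ = j` equally often. So if `A` determined every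
direction of a plane `P`, then `Ê` would vanish on `P \ {0}`, and summing `Ê` over `P` would
give `|E| = p² · |E ∩ P^⊥|`, impossible for `|E| = mp` with `0 < m < p`. Hence one of the
`p + 1` lines of `P` is not determined.
-/

open Matrix Polynomial
open scoped LinearAlgebra.Projectivization

section Fourier

variable {p d : ℕ}

local notation "ψ" => (ZMod.stdAddChar : AddChar (ZMod p) ℂ)

section NeZero

variable [NeZero p]

theorem stdAddChar_eq_one_iff {z : ZMod p} : ψ z = 1 ↔ z = 0 :=
  ZMod.injective_stdAddChar.eq_iff' (AddChar.map_zero_eq_one _)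

theorem stdAddChar_eq_pow_val (j : ZMod p) : ψ j = ψ 1 ^ j.val := by
  rw [← AddChar.map_nsmul_eq_pow, nsmul_one, ZMod.natCast_zmod_val]

theorem stdAddChar_mul_conj (u v : ZMod p) : ψ u * (starRingEnd ℂ) (ψ v) = ψ (u - v) := by
  rw [ZMod.stdAddChar_apply, ZMod.stdAddChar_apply, ← Circle.coe_inv_eq_conj, ← Circle.coe_mul,
    ← div_eq_mul_inv, ← AddChar.map_sub_eq_div]
  rfl

theorem chr_eq_stdAddChar (a x : Fin d → ZMod p) : chr p a x = ψ (x ⬝ᵥ a) := by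
  rw [chr, ZMod.stdAddChar_apply, ZMod.toCircle_apply]
  rfl

/-- Up to normalisation and complex conjugation this is `ftE p B ξ`, with the same zeros. -/
noncomputable def expSum (B : Finset (Fin d → ZMod p)) (ξ : Fin d → ZMod p) : ℂ :=
  ∑ x ∈ B, ψ (x ⬝ᵥ ξ)

theorem expSum_eq_sum_card_mul (B : Finset (Fin d → ZMod p)) (ξ : Fin d → ZMod p) :
    expSum B ξ = ∑ j, (#{x ∈ B | x ⬝ᵥ ξ = j} : ℂ) * ψ j := by
  rw [expSum, ← sum_fiberwise' B (· ⬝ᵥ ξ)]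
  simp only [sum_const, nsmul_eq_mul]

theorem sum_stdAddChar_mul_conj (E : Finset (Fin d → ZMod p)) (a b : Fin d → ZMod p) :
    ∑ x ∈ E, ψ (x ⬝ᵥ a) * (starRingEnd ℂ) (ψ (x ⬝ᵥ b)) = expSum E (a - b) := by
  simp only [stdAddChar_mul_conj, ← dotProduct_sub, expSum]

theorem sum_stdAddChar_dotProduct (W : Submodule (ZMod p) (Fin d → ZMod p)) [Fintype W]
    (x : Fin d → ZMod p) [Decidable (x ∈ perpSet p W)] :
    ∑ ξ : W, ψ (x ⬝ᵥ ξ) = if x ∈ perpSet p W then (Fintype.card W : ℂ) else 0 := by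
  let χ : AddChar W ℂ := AddChar.compAddMonoidHom ψ
    (AddMonoidHom.mk' (fun ξ : W => x ⬝ᵥ (ξ : Fin d → ZMod p)) fun ξ η => dotProduct_add _ _ _)
  have hχ : χ = 0 ↔ x ∈ perpSet p W := by
    rw [AddChar.eq_zero_iff, Subtype.forall]
    exact forall₂_congr fun ξ _ => stdAddChar_eq_one_iff
  classical
  exact (AddChar.sum_eq_ite χ).trans (if_congr hχ rfl rfl)

theorem sum_expSum_submodule (B : Finset (Fin d → ZMod p))
    (W : Submodule (ZMod p) (Fin d → ZMod p)) [Fintype W] [DecidablePred (· ∈ perpSet p W)] :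
    ∑ ξ : W, expSum B ξ = Fintype.card W * #{x ∈ B | x ∈ perpSet p W} := by
  simp only [expSum]
  rw [sum_comm]
  simp [sum_stdAddChar_dotProduct, sum_ite, mul_comm]

theorem natCard_dvd_card_of_expSum_eq_zero {B : Finset (Fin d → ZMod p)}
    {W : Submodule (ZMod p) (Fin d → ZMod p)} (h : ∀ ξ ∈ W, ξ ≠ 0 → expSum B ξ = 0) :
    Nat.card W ∣ #B := by
  classical
  have : Fintype W := Fintype.ofFinite W
  have hsum : ∑ ξ : W, expSum B ξ = #B := by
    rw [sum_eq_single (0 : W) (fun ξ _ hξ => h ξ ξ.2 (by simpa using hξ)) (by simp)]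
    simp [expSum]
  rw [sum_expSum_submodule, Fintype.card_eq_nat_card] at hsum
  exact Dvd.intro _ (by exact_mod_cast hsum)

/-- The characters `χ_a`, `a ∈ A`, are pairwise orthogonal in `L²(E)`. -/
def IsOrthogonalPair (p : ℕ) [NeZero p] {d : ℕ} (E A : Finset (Fin d → ZMod p)) : Prop :=
  ∀ a ∈ A, ∀ b ∈ A, a ≠ b → expSum E (a - b) = 0

theorem IsSpectralPair.isOrthogonalPair {E A : Finset (Fin d → ZMod p)}
    (h : IsSpectralPair p E A) : IsOrthogonalPair p E A := fun a ha b hb hab => by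
  simpa only [chr_eq_stdAddChar, sum_stdAddChar_mul_conj] using h.1 a ha b hb hab

/-- The character table `(χ_a(x))_{a ∈ A, x ∈ E}` is square with orthogonal rows of equal
length, so it is a multiple of a unitary matrix and its columns are orthogonal too. -/
theorem IsOrthogonalPair.symm {E A : Finset (Fin d → ZMod p)} (h : IsOrthogonalPair p E A)
    (hcard : #E = #A) : IsOrthogonalPair p A E := by
  intro x hx y hy hxy
  let M : Matrix A E ℂ := Matrix.of fun a x => ψ (x.1 ⬝ᵥ a.1)
  have hMMH (a b : A) : (M * Mᴴ) a b = expSum E (a - b) := by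
    simp only [M, Matrix.mul_apply, Matrix.conjTranspose_apply, Matrix.of_apply, RCLike.star_def]
    exact (sum_coe_sort E _).trans (sum_stdAddChar_mul_conj E a b)
  have hMHM (x y : E) : (Mᴴ * M) x y = expSum A (y - x) := by
    simp only [M, Matrix.mul_apply, Matrix.conjTranspose_apply, Matrix.of_apply, RCLike.star_def,
      mul_comm (starRingEnd ℂ _), dotProduct_comm (x : Fin d → ZMod p),
      dotProduct_comm (y : Fin d → ZMod p)]
    exact (sum_coe_sort A _).trans (sum_stdAddChar_mul_conj A y x)
  have hE : (#E : ℂ) ≠ 0 := Nat.cast_ne_zero.2 (card_ne_zero_of_mem hx)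
  have hrows : M * ((#E : ℂ)⁻¹ • Mᴴ) = 1 := by
    ext a b
    rw [Matrix.mul_smul, Matrix.smul_apply, hMMH, Matrix.one_apply]
    split_ifs with hab
    · simp [hab, expSum, hE]
    · rw [h a a.2 b b.2 (Subtype.coe_injective.ne hab), smul_zero]
  have hcols := (Matrix.mul_eq_one_comm_of_equiv
    (Fintype.equivOfCardEq (by simp [hcard]) : A ≃ E)).1 hrows
  have hyx := congrFun (congrFun hcols ⟨y, hy⟩) ⟨x, hx⟩
  rwa [Matrix.smul_mul, Matrix.smul_apply, hMHM, Matrix.one_apply_ne (by simpa using hxy.symm),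
    smul_eq_zero, or_iff_right (inv_ne_zero hE)] at hyx

end NeZero

section Prime

variable [Fact p.Prime]

theorem isPrimitiveRoot_stdAddChar_one : IsPrimitiveRoot (ψ 1) p := by
  have := Complex.isPrimitiveRoot_exp p (Fact.out : p.Prime).ne_zero
  rwa [← Int.cast_one, ZMod.stdAddChar_coe, Int.cast_one, mul_one]

theorem stdAddChar_ne_zero : ψ ≠ 0 :=
  AddChar.ne_zero_iff.2 ⟨1, fun h => one_ne_zero (stdAddChar_eq_one_iff.1 h)⟩

theorem coeff_cyclotomic_prime {k : ℕ} (hk : k < p) : (cyclotomic p ℚ).coeff k = 1 := by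
  simp [cyclotomic_prime, coeff_X_pow, hk]

/-- The minimal polynomial `1 + X + ⋯ + X ^ (p - 1)` of `ζ = ψ 1` divides `∑ c j • X ^ j`, which
has degree at most `p - 1`, so the two are proportional. -/
theorem eq_of_sum_mul_stdAddChar_eq_zero {c : ZMod p → ℚ}
    (h : ∑ j, (c j : ℂ) * ψ j = 0) (j : ZMod p) : c j = c 0 := by
  let q : ℚ[X] := ∑ i : ZMod p, C (c i) * X ^ i.val
  have hcoeff (j : ZMod p) : q.coeff j.val = c j := by
    simp [q, coeff_X_pow, ZMod.val_injective p |>.eq_iff]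
  have hroot : aeval (ψ 1) q = 0 := by
    simpa [q, ← stdAddChar_eq_pow_val] using h
  have hdeg : q.natDegree ≤ (cyclotomic p ℚ).natDegree := by
    rw [natDegree_cyclotomic, Nat.totient_prime Fact.out]
    refine natDegree_sum_le_of_forall_le _ _ fun i _ => (natDegree_C_mul_X_pow_le _ _).trans ?_
    have := ZMod.val_lt i
    omega
  have hq := eq_leadingCoeff_mul_of_monic_of_dvd_of_natDegree_le (cyclotomic.monic p ℚ)
    ((cyclotomic_eq_minpoly_rat isPrimitiveRoot_stdAddChar_one (Fact.out : p.Prime).pos) ▸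
      minpoly.dvd ℚ _ hroot) hdeg
  generalize q.leadingCoeff = a at hq
  have hc (j : ZMod p) : c j = a := by
    rw [← hcoeff, hq, coeff_C_mul, coeff_cyclotomic_prime (ZMod.val_lt j), mul_one]
  rw [hc, hc]

theorem expSum_eq_zero_iff (B : Finset (Fin d → ZMod p)) (ξ : Fin d → ZMod p) :
    expSum B ξ = 0 ↔ ∀ j, #{x ∈ B | x ⬝ᵥ ξ = j} = #{x ∈ B | x ⬝ᵥ ξ = 0} := by
  rw [expSum_eq_sum_card_mul]
  constructor
  · intro h j
    exact_mod_cast eq_of_sum_mul_stdAddChar_eq_zero (c := fun j => (#{x ∈ B | x ⬝ᵥ ξ = j} : ℚ))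
      (by simpa using h) j
  · intro h
    simp only [h, ← mul_sum]
    rw [AddChar.sum_eq_zero_iff_ne_zero.2 stdAddChar_ne_zero, mul_zero]

theorem expSum_smul_eq_zero {B : Finset (Fin d → ZMod p)} {ξ : Fin d → ZMod p}
    (h : expSum B ξ = 0) {t : ZMod p} (ht : t ≠ 0) : expSum B (t • ξ) = 0 := by
  have hfiber (j : ZMod p) : #{x ∈ B | x ⬝ᵥ t • ξ = j} = #{x ∈ B | x ⬝ᵥ ξ = t⁻¹ * j} := by
    simp only [dotProduct_smul, smul_eq_mul, eq_inv_mul_iff_mul_eq₀ ht]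
  rw [expSum_eq_zero_iff] at h ⊢
  intro j
  rw [hfiber, hfiber, mul_zero, h]

theorem IsOrthogonalPair.expSum_eq_zero_of_determines {B F : Finset (Fin d → ZMod p)}
    (h : IsOrthogonalPair p B F) {ξ : Fin d → ZMod p}
    (hξ : Determines p F (Submodule.span (ZMod p) {ξ})) : expSum B ξ = 0 := by
  obtain ⟨f₁, hf₁, f₂, hf₂, hne, hmem⟩ := hξ
  obtain ⟨t, ht⟩ := Submodule.mem_span_singleton.1 hmem
  have ht0 : t ≠ 0 := by
    rintro rfl
    exact hne (sub_eq_zero.1 (by simpa using ht.symm))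
  have := expSum_smul_eq_zero (ht ▸ h f₁ hf₁ f₂ hf₂ hne) (inv_ne_zero ht0)
  rwa [inv_smul_smul₀ ht0] at this

theorem IsOrthogonalPair.exists_not_determines {B F : Finset (Fin d → ZMod p)}
    (h : IsOrthogonalPair p B F) {P : Submodule (ZMod p) (Fin d → ZMod p)}
    (hP : ¬ Nat.card P ∣ #B) :
    ∃ D : Submodule (ZMod p) (Fin d → ZMod p),
      Module.finrank (ZMod p) D = 1 ∧ D ≤ P ∧ ¬ Determines p F D := by
  by_contra! hall
  refine hP (natCard_dvd_card_of_expSum_eq_zero fun ξ hξ hξ0 => ?_)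
  exact h.expSum_eq_zero_of_determines (hall _ (finrank_span_singleton hξ0)
    ((Submodule.span_singleton_le_iff_mem _ _).2 hξ))

end Prime

end Fourier

section Lines

variable {K V : Type*} [Field K] [AddCommGroup V] [Module K V]

theorem Submodule.exists_map_subtype_submodule_eq {P D : Submodule K V}
    (hD : Module.finrank K D = 1) (hDP : D ≤ P) :
    ∃ x : ℙ K P, x.submodule.map P.subtype = D := by
  have : Module.finrank K (D.comap P.subtype) = 1 :=
    (Submodule.comapSubtypeEquivOfLe hDP).finrank_eq.trans hD
  refine ⟨.mk'' _ this, ?_⟩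
  rw [Projectivization.submodule_mk'', Submodule.map_comap_subtype, inf_eq_right.2 hDP]

theorem ncard_setOf_lines_lt [Finite V] {P : Submodule K V} {Q : Submodule K V → Prop}
    (hQ : ∃ D : Submodule K V, Module.finrank K D = 1 ∧ D ≤ P ∧ ¬ Q D) :
    {D : Submodule K V | Module.finrank K D = 1 ∧ D ≤ P ∧ Q D}.ncard < Nat.card (ℙ K P) := by
  obtain ⟨D₀, hD₀, hD₀P, hQD₀⟩ := hQ
  let line (x : ℙ K P) : Submodule K V := x.submodule.map P.subtype
  obtain ⟨x₀, rfl⟩ := Submodule.exists_map_subtype_submodule_eq hD₀ hD₀P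
  have hsub : {D : Submodule K V | Module.finrank K D = 1 ∧ D ≤ P ∧ Q D} ⊆
      line '' {x | Q (line x)} := by
    rintro D ⟨hD, hDP, hQD⟩
    obtain ⟨x, rfl⟩ := Submodule.exists_map_subtype_submodule_eq hD hDP
    exact ⟨x, hQD, rfl⟩
  calc _ ≤ (line '' {x | Q (line x)}).ncard := Set.ncard_le_ncard hsub (Set.toFinite _)
    _ ≤ {x | Q (line x)}.ncard := Set.ncard_image_le (Set.toFinite _)
    _ < (Set.univ : Set (ℙ K P)).ncard :=
      Set.ncard_lt_ncard (Set.ssubset_univ_iff.2 fun h => hQD₀ (Set.eq_univ_iff_forall.1 h x₀))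
    _ = Nat.card (ℙ K P) := Set.ncard_univ _

end Lines

theorem determines_at_most_p_directions_of_plane_general (p m : ℕ) (hp : p.Prime)
    (E A : Finset (Fin 3 → ZMod p))
    (hpair : IsSpectralPair p E A)
    (hE : E.card = m * p) (hA : A.card = m * p)
    (hm : 2 ≤ m) (hm' : m ≤ p - 1)
    (P : Submodule (ZMod p) (Fin 3 → ZMod p))
    (hP : Module.finrank (ZMod p) P = 2) :
    {D : Submodule (ZMod p) (Fin 3 → ZMod p) |
        Module.finrank (ZMod p) D = 1 ∧ D ≤ P ∧ Determines p E D}.ncard ≤ p ∧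
    {D : Submodule (ZMod p) (Fin 3 → ZMod p) |
        Module.finrank (ZMod p) D = 1 ∧ D ≤ P ∧ Determines p A D}.ncard ≤ p := by
  have := Fact.mk hp
  have hndvd : ¬ Nat.card P ∣ m * p := by
    rw [Module.natCard_eq_pow_finrank (K := ZMod p), Nat.card_zmod, hP, sq]
    intro h
    have := Nat.le_of_dvd (by omega) (Nat.dvd_of_mul_dvd_mul_right hp.pos h)
    omega
  have hcount {B F : Finset (Fin 3 → ZMod p)} (hB : #B = m * p) (hBF : IsOrthogonalPair p B F) :
      {D : Submodule (ZMod p) (Fin 3 → ZMod p) |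
        Module.finrank (ZMod p) D = 1 ∧ D ≤ P ∧ Determines p F D}.ncard ≤ p := by
    have := ncard_setOf_lines_lt (hBF.exists_not_determines (hB ▸ hndvd))
    rwa [Projectivization.card_of_finrank_two _ _ hP, Nat.card_zmod, Nat.lt_succ_iff] at this
  have hEA := hpair.isOrthogonalPair
  exact ⟨hcount hA (hEA.symm (hE.trans hA.symm)), hcount hE hEA⟩

/-- If `(E, A)` is a spectral pair in `𝔽_p^3` (`p` an odd prime) with
`|E| = |A| = mp`, `2 ≤ m ≤ p - 1`, then `E` and `A` each determine at most `p`
of the `p + 1` one-dimensional subspaces contained in any two-dimensional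
subspace `P`. -/
theorem determines_at_most_p_directions_of_plane (p m : ℕ) (hp : p.Prime)
    (hodd : Odd p) (E A : Finset (Fin 3 → ZMod p))
    (hpair : IsSpectralPair p E A)
    (hE : E.card = m * p) (hA : A.card = m * p)
    (hm : 2 ≤ m) (hm' : m ≤ p - 1)
    (P : Submodule (ZMod p) (Fin 3 → ZMod p))
    (hP : Module.finrank (ZMod p) P = 2) :
    {D : Submodule (ZMod p) (Fin 3 → ZMod p) |
        Module.finrank (ZMod p) D = 1 ∧ D ≤ P ∧ Determines p E D}.ncard ≤ p ∧
    {D : Submodule (ZMod p) (Fin 3 → ZMod p) |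
        Module.finrank (ZMod p) D = 1 ∧ D ≤ P ∧ Determines p A D}.ncard ≤ p :=
  determines_at_most_p_directions_of_plane_general p m hp E A hpair hE hA hm hm' P hP
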